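/- arXiv:1503.05999 — 6 statements merged into one kernel-verified Lean document; each statement's English description precedes it below -/
import Mathlib

section
/- Let m ≥ 2 and let f(x_l,…,x_r) = Σ_{i=l}^{r} λ_i x_i (mod m) be a linear local rule with associated cellular automaton T_f on (ZMod m)^ℤ. Then T_f is bijective if and only if for every prime factor p of m there exists a unique index j with l ≤ j ≤ r such that p does not divide λ_j (i.e., the reduction of f modulo p is permutative at exactly one index). -/
/-- The linear cellular automaton on `(ZMod m)^ℤ` with local rule
`f(x_l, …, x_r) = Σ_{j=l}^{r} λ_j x_j (mod m)`:
`(T_f x)_i = Σ_{j=l}^{r} λ_j x_{i+j}`. -/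
noncomputable def cellAuto (m : ℕ) (l r : ℤ) (lam : ℤ → ZMod m) :
    (ℤ → ZMod m) → (ℤ → ZMod m) :=
  fun x i => ∑ j ∈ Finset.Icc l r, lam j * x (i + j)

/-!
Via `T^j ↦ (x ↦ x (· + j))`, `cellAuto m l r lam` is the action on sequences of the Laurent
polynomial `P = Σ_{j=l}^{r} λ_j T^j` over `ZMod m`. A prime ideal of `(ZMod m)[T;T⁻¹]` contracts
to the ideal of multiples of some prime `p ∣ m`; if exactly one `λ_j` survives modulo `p`, then
`P` is congruent to a unit monomial there, so it lies in no prime ideal and is a unit, whence the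
automaton is invertible. Conversely, if modulo some `p ∣ m` no coefficient or at least two
survive, the recurrence `Σ λ_j y_{i+j} = 0` has a nonzero solution `y` over `ZMod p`: the constant
one, resp. `y_i = φ(α^i)` for a nonzero root `α` of `P mod p` in an algebraic closure and a linear
form `φ` with `φ 1 ≠ 0`. Multiplying `y` by `m / p` gives a nonzero sequence in the kernel.
-/

open Finset

namespace LaurentPolynomial

variable {R : Type*} [CommRing R]

variable (R) in
def shiftHom : Multiplicative ℤ →* Module.End R (ℤ → R) where
  toFun n := LinearMap.funLeft R R (· + n.toAdd)
  map_one' := by ext x i; simp [LinearMap.funLeft]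
  map_mul' a b := by
    ext x i
    simp [Module.End.mul_apply, LinearMap.funLeft, add_assoc]

variable (R) in
noncomputable def seqOperator : R[T;T⁻¹] →ₐ[R] Module.End R (ℤ → R) :=
  AddMonoidAlgebra.lift R _ ℤ (shiftHom R)

theorem seqOperator_sum_C_mul_T (s : Finset ℤ) (c : ℤ → R) (x : ℤ → R) :
    seqOperator R (∑ j ∈ s, C (c j) * T j) x = fun i => ∑ j ∈ s, c j * x (i + j) := by
  ext i
  simp [seqOperator, ← single_eq_C_mul_T, shiftHom, LinearMap.funLeft]

theorem isUnit_sum_C_mul_T_of_forall_isPrime (s : Finset ℤ) (c : ℤ → R)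
    (h : ∀ 𝔭 : Ideal R, 𝔭.IsPrime → ∃ j ∈ s, c j ∉ 𝔭 ∧ ∀ k ∈ s, k ≠ j → c k ∈ 𝔭) :
    IsUnit (∑ j ∈ s, C (c j) * T j) := by
  by_contra hP
  obtain ⟨M, hM, hPM⟩ := exists_max_ideal_of_mem_nonunits hP
  obtain ⟨j, hj, hcj, hrest⟩ := h (M.comap C) (hM.isPrime.comap C)
  rw [← add_sum_erase s _ hj] at hPM
  have hleading : C (c j) * T j ∈ M := by
    refine (M.add_mem_iff_left (M.sum_mem fun k hk => M.mul_mem_right _ ?_)).mp hPM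
    exact hrest k (mem_of_mem_erase hk) (ne_of_mem_erase hk)
  exact hcj ((M.mul_unit_mem_iff_mem (isUnit_T j)).mp hleading)

end LaurentPolynomial

namespace ZMod

theorem exists_prime_dvd_forall_mem_iff {m : ℕ} [NeZero m] (𝔭 : Ideal (ZMod m)) [𝔭.IsPrime] :
    ∃ p, p.Prime ∧ p ∣ m ∧ ∀ x : ZMod m, x ∈ 𝔭 ↔ p ∣ x.val := by
  set p := ringChar (ZMod m ⧸ 𝔭)
  have hpm : p ∣ m := by
    rw [← CharP.cast_eq_zero_iff (ZMod m ⧸ 𝔭) p, ← map_natCast (Ideal.Quotient.mk 𝔭),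
      natCast_self, map_zero]
  have : NeZero p := ⟨ne_zero_of_dvd_ne_zero (NeZero.ne m) hpm⟩
  refine ⟨p, (CharP.char_is_prime_of_pos (ZMod m ⧸ 𝔭) p).out, hpm, fun x => ?_⟩
  rw [← Ideal.Quotient.eq_zero_iff_mem, ← natCast_zmod_val x, map_natCast,
    CharP.cast_eq_zero_iff (ZMod m ⧸ 𝔭) p, val_natCast_of_lt (val_lt x)]

variable {m p : ℕ}

def mulDivHom (hd : p ∣ m) : ZMod p →+ ZMod m :=
  ZMod.lift p ⟨zmultiplesHom _ ((m / p : ℕ) : ZMod m), by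
    simp [← Nat.cast_mul, Nat.mul_div_cancel' hd]⟩

theorem mulDivHom_intCast (hd : p ∣ m) (k : ℤ) :
    mulDivHom hd k = k * ((m / p : ℕ) : ZMod m) := by
  simp [mulDivHom, ZMod.lift_coe]

theorem natCast_mul_mulDivHom (hd : p ∣ m) (n : ℕ) (z : ZMod p) :
    (n : ZMod m) * mulDivHom hd z = mulDivHom hd (n * z) := by
  rw [← nsmul_eq_mul, ← nsmul_eq_mul, map_nsmul]

theorem mulDivHom_injective [NeZero m] (hd : p ∣ m) : Function.Injective (mulDivHom hd) := by
  refine (injective_iff_map_eq_zero _).mpr fun z hz => ?_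
  obtain ⟨k, rfl⟩ := intCast_surjective z
  have hm : ((p * (m / p) : ℕ) : ℤ) = m := congrArg _ (Nat.mul_div_cancel' hd)
  have hq : ((m / p : ℕ) : ℤ) ≠ 0 := by
    intro h0
    rw [Nat.cast_mul, h0, mul_zero] at hm
    exact NeZero.ne m (by exact_mod_cast hm.symm)
  rw [mulDivHom_intCast, ← Int.cast_natCast, ← Int.cast_mul, intCast_zmod_eq_zero_iff_dvd,
    ← hm, Nat.cast_mul] at hz
  rw [intCast_zmod_eq_zero_iff_dvd]
  exact Int.dvd_of_mul_dvd_mul_right hq hz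

end ZMod

section Recurrence

open Polynomial

variable {F : Type*} [Field F] {s : Finset ℤ} {c : ℤ → F}

theorem exists_ne_zero_sum_algebraMap_mul_zpow_eq_zero (K : Type*) [Field K] [IsAlgClosed K]
    [Algebra F K] {j₁ j₂ : ℤ} (h₁ : j₁ ∈ s) (h₂ : j₂ ∈ s) (hne : j₁ ≠ j₂) (hc₁ : c j₁ ≠ 0)
    (hc₂ : c j₂ ≠ 0) :
    ∃ α : K, α ≠ 0 ∧ ∑ j ∈ s, algebraMap F K (c j) * α ^ j = 0 := by
  classical
  set t := s.filter (c · ≠ 0)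
  have ht₁ : j₁ ∈ t := mem_filter.mpr ⟨h₁, hc₁⟩
  have ht₂ : j₂ ∈ t := mem_filter.mpr ⟨h₂, hc₂⟩
  set a := t.min' ⟨j₁, ht₁⟩
  have ha : a ∈ t := t.min'_mem _
  have hmin : ∀ j ∈ t, a ≤ j := fun j hj => t.min'_le j hj
  -- `Q = T^(-a) · Σ_j c_j T^j`, `a` the least index with `c a ≠ 0`, has nonzero constant term,
  -- so its roots are nonzero.
  set Q : F[X] := ∑ j ∈ t, monomial (j - a).toNat (c j)
  have hcoeff : ∀ j ∈ t, Q.coeff (j - a).toNat = c j := by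
    intro j hj
    rw [finsetSum_coeff, sum_eq_single j]
    · simp
    · intro k hk hkj
      have := hmin k hk
      have := hmin j hj
      rw [coeff_monomial, if_neg (by omega)]
    · exact absurd hj
  obtain ⟨b, hb, hba⟩ : ∃ b ∈ t, b ≠ a := by
    by_cases h : j₁ = a
    · exact ⟨j₂, ht₂, fun h' => hne (h.trans h'.symm)⟩
    · exact ⟨j₁, ht₁, h⟩
  have hdeg : Q.degree ≠ 0 := by
    intro h
    have hb' := le_natDegree_of_ne_zero ((hcoeff b hb).trans_ne (mem_filter.mp hb).2)
    have := hmin b hb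
    rw [show Q.natDegree = 0 from natDegree_eq_of_degree_eq_some h] at hb'
    omega
  obtain ⟨α, hα⟩ := IsAlgClosed.exists_aeval_eq_zero K Q hdeg
  have hα0 : α ≠ 0 := by
    rintro rfl
    apply (mem_filter.mp ha).2
    rw [← hcoeff a ha, sub_self, Int.toNat_zero]
    apply FaithfulSMul.algebraMap_injective F K
    rw [coeff_zero_eq_aeval_zero', hα, map_zero]
  refine ⟨α, hα0, ?_⟩
  calc ∑ j ∈ s, algebraMap F K (c j) * α ^ j
      = ∑ j ∈ t, algebraMap F K (c j) * α ^ j :=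
        (sum_filter_of_ne (p := (c · ≠ 0)) fun j _ hj h0 => hj (by simp [h0])).symm
    _ = α ^ a * aeval α Q := by
        rw [map_sum, mul_sum]
        refine sum_congr rfl fun j hj => ?_
        have := hmin j hj
        rw [aeval_monomial, mul_left_comm, ← zpow_natCast, ← zpow_add₀ hα0,
          Int.toNat_of_nonneg (by omega), add_sub_cancel]
    _ = 0 := by rw [hα, mul_zero]

theorem sum_mul_map_zpow_add_eq_zero {K : Type*} [Field K] [Algebra F K] (φ : K →ₗ[F] F) {α : K}
    (hα : α ≠ 0) (h : ∑ j ∈ s, algebraMap F K (c j) * α ^ j = 0) (i : ℤ) :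
    ∑ j ∈ s, c j * φ (α ^ (i + j)) = 0 := by
  simp_rw [← smul_eq_mul, ← map_smul, ← map_sum, zpow_add₀ hα, Algebra.smul_def,
    mul_left_comm _ (α ^ i), ← mul_sum, h, mul_zero, map_zero]

theorem exists_ne_zero_forall_sum_mul_eq_zero (h : ¬ ∃! j, j ∈ s ∧ c j ≠ 0) :
    ∃ y : ℤ → F, y ≠ 0 ∧ ∀ i, ∑ j ∈ s, c j * y (i + j) = 0 := by
  by_cases hex : ∃ j, j ∈ s ∧ c j ≠ 0
  · obtain ⟨j₁, h₁, hc₁⟩ := hex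
    obtain ⟨j₂, ⟨h₂, hc₂⟩, hne⟩ : ∃ j₂, (j₂ ∈ s ∧ c j₂ ≠ 0) ∧ j₂ ≠ j₁ := by
      by_contra! hall
      exact h ⟨j₁, ⟨h₁, hc₁⟩, hall⟩
    obtain ⟨α, hα, hroot⟩ := exists_ne_zero_sum_algebraMap_mul_zpow_eq_zero (AlgebraicClosure F)
      h₁ h₂ hne.symm hc₁ hc₂
    obtain ⟨φ, hφ⟩ :=
      Module.Projective.exists_dual_ne_zero F (one_ne_zero (α := AlgebraicClosure F))
    exact ⟨fun i => φ (α ^ i), fun h0 => hφ (by simpa using congrFun h0 0),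
      sum_mul_map_zpow_add_eq_zero φ hα hroot⟩
  · push Not at hex
    exact ⟨1, one_ne_zero, fun i => sum_eq_zero fun j hj => by rw [hex j hj, zero_mul]⟩

end Recurrence

open LaurentPolynomial

theorem cellAuto_eq_seqOperator (m : ℕ) (l r : ℤ) (lam : ℤ → ZMod m) :
    cellAuto m l r lam = seqOperator (ZMod m) (∑ j ∈ Icc l r, C (lam j) * T j) :=
  funext fun x => (seqOperator_sum_C_mul_T _ _ x).symm

theorem cellAuto_comp_mulDivHom {m p : ℕ} [NeZero m] (hd : p ∣ m) (l r : ℤ) (lam : ℤ → ZMod m)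
    (y : ℤ → ZMod p) :
    cellAuto m l r lam (ZMod.mulDivHom hd ∘ y) =
      ZMod.mulDivHom hd ∘ fun i => ∑ j ∈ Icc l r, ((lam j).val : ZMod p) * y (i + j) := by
  funext i
  simp only [cellAuto, Function.comp_apply, map_sum, ← ZMod.natCast_mul_mulDivHom,
    ZMod.natCast_zmod_val]

theorem bijective_cellAuto_of_forall_prime {m : ℕ} [NeZero m] {l r : ℤ} {lam : ℤ → ZMod m}
    (h : ∀ p : ℕ, p.Prime → p ∣ m → ∃! j, j ∈ Icc l r ∧ ¬ p ∣ (lam j).val) :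
    Function.Bijective (cellAuto m l r lam) := by
  have hunit := isUnit_sum_C_mul_T_of_forall_isPrime (Icc l r) lam fun 𝔭 _ => by
    obtain ⟨p, hp, hpm, hmem⟩ := ZMod.exists_prime_dvd_forall_mem_iff 𝔭
    obtain ⟨j, ⟨hj, hpj⟩, huniq⟩ := h p hp hpm
    exact ⟨j, hj, (hmem _).not.mpr hpj,
      fun k hk hkj => (hmem _).mpr (not_not.mp fun hpk => hkj (huniq k ⟨hk, hpk⟩))⟩
  rw [cellAuto_eq_seqOperator]
  exact (Module.End.isUnit_iff _).mp (hunit.map _)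

theorem invertible_iff_unique_permutative_index_general
    (m : ℕ) (hm : 2 ≤ m) (l r : ℤ) (lam : ℤ → ZMod m) :
    Function.Bijective (cellAuto m l r lam) ↔
      ∀ p : ℕ, p.Prime → p ∣ m →
        ∃! j : ℤ, l ≤ j ∧ j ≤ r ∧ ¬ (p : ℕ) ∣ (lam j).val := by
  have : NeZero m := ⟨by omega⟩
  simp only [← and_assoc, ← mem_Icc]
  refine ⟨fun hbij p hp hpm => ?_, bijective_cellAuto_of_forall_prime⟩
  have := Fact.mk hp
  by_contra huniq
  obtain ⟨y, hy0, hy⟩ := exists_ne_zero_forall_sum_mul_eq_zero (s := Icc l r)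
    (c := fun j => ((lam j).val : ZMod p)) (by simpa only [ne_eq, ZMod.natCast_eq_zero_iff])
  have hker : cellAuto m l r lam (ZMod.mulDivHom hpm ∘ y) =
      cellAuto m l r lam (ZMod.mulDivHom hpm ∘ 0) := by
    rw [cellAuto_comp_mulDivHom, cellAuto_comp_mulDivHom]
    simp only [hy, Pi.zero_apply, mul_zero, sum_const_zero]
  exact hy0 (funext fun i => ZMod.mulDivHom_injective hpm (congrFun (hbij.1 hker) i))

/-- A linear cellular automaton is bijective iff for every prime factor `p` of `m`
there is a unique index `j` with `l ≤ j ≤ r` such that `p` does not divide `λ_j`. -/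
theorem invertible_iff_unique_permutative_index
    (m : ℕ) (hm : 2 ≤ m) (l r : ℤ) (hlr : l ≤ r) (lam : ℤ → ZMod m)
    (hnz : ∃ j ∈ Finset.Icc l r, lam j ≠ 0) :
    Function.Bijective (cellAuto m l r lam) ↔
      ∀ p : ℕ, p.Prime → p ∣ m →
        ∃! j : ℤ, l ≤ j ∧ j ≤ r ∧ ¬ (p : ℕ) ∣ (lam j).val :=
  invertible_iff_unique_permutative_index_general m hm l r lam
end

section
/- Let m ≥ 2 and let T_f be an invertible linear cellular automaton on (ZMod m)^ℤ with local rule f(x_l,…,x_r) = Σ_{i=l}^{r} λ_i x_i (mod m), so that for each prime factor p of m there is a unique index j_p with p ∤ λ_{j_p}. Then T_f fails to be ergodic with respect to the uniform Bernoulli measure if and only if j_p = 0 for some prime factor p of m. -/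
/-!
Modulo a prime `p ∣ m` only the coefficient `λ_{j_p}` survives, so `T` acts modulo `p` as
`x ↦ λ_{j_p} · σ^{j_p} x`. If `j_p = 0`, the set `{x | x₀ ≡ x₁ (mod p)}` is invariant and has
measure `1/p`. If no `j_p` vanishes, then for large `n` the values of `Tⁿx` on one finite window and
of `x` on another can be prescribed independently modulo every `p`, hence modulo `m`. The
Bernoulli measure is translation invariant, so it pushes forward to the uniform measure under any
surjective homomorphism onto a finite group; thus every cylinder set is independent of its
`n`-th preimage, and approximating an invariant set `A` by cylinders gives `μ A = (μ A)²`.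
-/

open MeasureTheory

/-- `μ` is the uniform Bernoulli measure on `(ZMod d)^ℤ`: the infinite product over `ℤ`
of the uniform probability measure on `ZMod d`, characterized by its values on cylinders. -/
def IsUniformBernoulli (d : ℕ) (μ : Measure (ℤ → ZMod d)) : Prop :=
  IsProbabilityMeasure μ ∧
    ∀ (s : Finset ℤ) (a : ℤ → ZMod d),
      μ {x | ∀ i ∈ s, x i = a i} = ((d : ENNReal))⁻¹ ^ s.card

/-- `T` is ergodic with respect to `μ`: every measurable `T`-invariant set is null or conull. -/
def IsErgodic {X : Type*} [MeasurableSpace X] (T : X → X) (μ : Measure X) : Prop :=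
  ∀ A : Set X, MeasurableSet A → T ⁻¹' A = A → μ A = 0 ∨ μ A = 1

open Set Filter
open scoped ENNReal symmDiff

section Ergodicity

variable {X : Type*} [MeasurableSpace X] {μ : Measure X} [IsProbabilityMeasure μ] {T : X → X}

theorem measureReal_le_sq_add_of_iterate_indep (hT : MeasurePreserving T μ μ) {A B : Set X}
    (hA : MeasurableSet A) (hB : MeasurableSet B) (hAT : T ⁻¹' A = A) {n : ℕ}
    (hn : μ (T^[n] ⁻¹' B ∩ B) = μ B * μ B) :
    μ.real A ≤ (μ.real A + μ.real (A ∆ B)) ^ 2 + 2 * μ.real (A ∆ B) := by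
  have hATn : T^[n] ⁻¹' A = A := by rw [preimage_iterate_eq, Function.iterate_fixed hAT]
  have hpre : μ.real (T^[n] ⁻¹' (A ∆ B)) = μ.real (A ∆ B) :=
    (hT.iterate n).measureReal_preimage (hA.symmDiff hB).nullMeasurableSet
  have hA_sub : A ⊆ (T^[n] ⁻¹' B ∩ B) ∪ (T^[n] ⁻¹' (A ∆ B) ∪ A ∆ B) := by
    intro x hx
    have hTx : T^[n] x ∈ A := by rwa [← mem_preimage, hATn]
    by_cases h₁ : T^[n] x ∈ B <;> by_cases h₂ : x ∈ B <;> simp_all [mem_symmDiff]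
  have hB_le : μ.real B ≤ μ.real A + μ.real (A ∆ B) :=
    (measureReal_mono fun x hx => by by_cases x ∈ A <;> simp_all [mem_symmDiff]).trans
      (measureReal_union_le A (A ∆ B))
  have hBB : μ.real (T^[n] ⁻¹' B ∩ B) = μ.real B ^ 2 := by
    rw [measureReal_def, hn, ENNReal.toReal_mul, sq]; rfl
  calc μ.real A
      ≤ μ.real (T^[n] ⁻¹' B ∩ B) + (μ.real (T^[n] ⁻¹' (A ∆ B)) + μ.real (A ∆ B)) :=
        (measureReal_mono hA_sub).trans <| (measureReal_union_le _ _).trans <|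
          add_le_add_right (measureReal_union_le _ _) _
    _ = μ.real B ^ 2 + 2 * μ.real (A ∆ B) := by rw [hBB, hpre]; ring
    _ ≤ (μ.real A + μ.real (A ∆ B)) ^ 2 + 2 * μ.real (A ∆ B) := by gcongr

theorem isErgodic_of_generateFrom_isSetRing (hT : MeasurePreserving T μ μ)
    {C : Set (Set X)} (hC : IsSetRing C) (hC_univ : univ ∈ C)
    (hgen : ‹MeasurableSpace X› = MeasurableSpace.generateFrom C)
    (hindep : ∀ B ∈ C, ∃ n, μ (T^[n] ⁻¹' B ∩ B) = μ B * μ B) : IsErgodic T μ := by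
  intro A hA hAT
  set a := μ.real A
  have ha : a ≤ a ^ 2 := by
    refine le_of_forall_pos_le_add fun ε hε => ?_
    obtain ⟨B, hBC, hBA⟩ := exists_measure_symmDiff_lt_of_generateFrom_isSetRing (μ := μ) hC
      ⟨{univ}, countable_singleton _, by simpa using hC_univ, by simp⟩ hgen hA
      (ENNReal.ofReal_pos.2 (div_pos hε (by norm_num : (0 : ℝ) < 5)))
    obtain ⟨n, hn⟩ := hindep B hBC
    have hδ : μ.real (A ∆ B) < ε / 5 := by
      rw [symmDiff_comm]; exact ENNReal.toReal_lt_of_lt_ofReal hBA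
    have key := measureReal_le_sq_add_of_iterate_indep hT hA
      (hgen ▸ MeasurableSpace.measurableSet_generateFrom hBC) hAT hn
    have : a ≤ 1 := measureReal_le_one (μ := μ)
    have : μ.real (A ∆ B) ≤ 1 := measureReal_le_one (μ := μ)
    nlinarith [measureReal_nonneg (μ := μ) (s := A), measureReal_nonneg (μ := μ) (s := A ∆ B)]
  have : a = 0 ∨ a = 1 := by
    rcases (measureReal_nonneg : 0 ≤ a).eq_or_lt with h | h
    · exact .inl h.symm
    · exact .inr (le_antisymm (measureReal_le_one (μ := μ)) (by nlinarith))
  exact this.imp (measureReal_eq_zero_iff (measure_ne_top μ A)).1 (ENNReal.toReal_eq_one_iff _).1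

end Ergodicity

section FiniteImage

variable {G H H' : Type*} [AddGroup G] [MeasurableSpace G] [MeasurableAdd G]
  [AddGroup H] [Fintype H] [MeasurableSpace H] [DiscreteMeasurableSpace H]
  [AddGroup H'] [Fintype H'] [MeasurableSpace H'] [DiscreteMeasurableSpace H']

theorem measure_singleton_eq_inv_card (ν : Measure H) [IsProbabilityMeasure ν]
    [ν.IsAddLeftInvariant] (y : H) : ν {y} = (Fintype.card H : ℝ≥0∞)⁻¹ := by
  have h_eq : ∀ y, ν {y} = ν {0} := fun y => by
    simpa [neg_add_eq_zero, eq_comm] using measure_preimage_add ν (-y) {0}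
  refine h_eq y ▸ ENNReal.eq_inv_of_mul_eq_one_left ?_
  rw [mul_comm, ← nsmul_eq_mul, ← Finset.card_univ, ← Finset.sum_const,
    ← Finset.sum_congr rfl fun y _ => h_eq y, sum_measure_singleton, Finset.coe_univ,
    measure_univ]

variable {μ : Measure G} [IsProbabilityMeasure μ] [μ.IsAddLeftInvariant]

theorem measure_preimage_singleton_eq_inv_card {φ : G →+ H} (hφ : Measurable φ)
    (hφ_surj : Function.Surjective φ) (y : H) :
    μ (φ ⁻¹' {y}) = (Fintype.card H : ℝ≥0∞)⁻¹ := by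
  have := isAddLeftInvariant_map (μ := μ) φ.toAddHom hφ hφ_surj
  have := Measure.isProbabilityMeasure_map (μ := μ) hφ.aemeasurable
  rw [← Measure.map_apply hφ (measurableSet_singleton y)]
  exact measure_singleton_eq_inv_card _ y

theorem measure_preimage_inter_preimage_eq_mul {φ : G →+ H} {ψ : G →+ H'} (hφ : Measurable φ)
    (hψ : Measurable ψ) (hsurj : Function.Surjective (φ.prod ψ)) (S : Set H) (S' : Set H') :
    μ (φ ⁻¹' S ∩ ψ ⁻¹' S') = μ (φ ⁻¹' S) * μ (ψ ⁻¹' S') := by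
  have hφψ : Measurable (φ.prod ψ) := hφ.prodMk hψ
  have hmap : μ.map (φ.prod ψ) = (μ.map φ).prod (μ.map ψ) := by
    refine Measure.ext_iff_singleton.2 fun ⟨a, b⟩ => ?_
    rw [Measure.map_apply hφψ (measurableSet_singleton _),
      measure_preimage_singleton_eq_inv_card hφψ hsurj, ← singleton_prod_singleton,
      Measure.prod_prod, Measure.map_apply hφ (measurableSet_singleton _),
      Measure.map_apply hψ (measurableSet_singleton _),
      measure_preimage_singleton_eq_inv_card hφ (Prod.fst_surjective.comp hsurj),
      measure_preimage_singleton_eq_inv_card hψ (Prod.snd_surjective.comp hsurj),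
      Fintype.card_prod, Nat.cast_mul, ENNReal.mul_inv (by simp) (by simp)]
  have h := congrArg (· (S ×ˢ S')) hmap
  simp only [Measure.prod_prod] at h
  rwa [Measure.map_apply hφψ (toFinite _).measurableSet,
    Measure.map_apply hφ (toFinite _).measurableSet,
    Measure.map_apply hψ (toFinite _).measurableSet] at h

end FiniteImage

theorem AddMonoidHom.surjective_of_forall_prime_dvd {M V : Type*} [AddCommGroup M]
    [AddCommGroup V] (φ : M →+ V) {m : ℕ} (hm : m ≠ 0) (hV : ∀ v : V, m • v = 0)
    (h : ∀ p, p.Prime → p ∣ m → ∀ v, ∃ x w, v = φ x + p • w) : Function.Surjective φ := by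
  have key : ∀ d, d ∣ m → ∀ v, ∃ x w, v = φ x + d • w := by
    intro d
    induction d using Nat.recOnMul with
    | zero => exact fun h0 => absurd (zero_dvd_iff.1 h0) hm
    | one => exact fun _ v => ⟨0, v, by simp⟩
    | prime p hp => exact h p hp
    | mul a b iha ihb =>
      intro hab v
      obtain ⟨x, w, rfl⟩ := iha (dvd_of_mul_right_dvd hab) v
      obtain ⟨x', w', rfl⟩ := ihb (dvd_of_mul_left_dvd hab) w
      exact ⟨x + a • x', w', by simp only [map_add, map_nsmul, smul_add, mul_smul]; abel⟩
  intro v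
  obtain ⟨x, w, hv⟩ := key m dvd_rfl v
  exact ⟨x, by rw [hv, hV, add_zero]⟩

theorem ZMod.castHom_eq_zero_iff_dvd_val {m p : ℕ} [NeZero m] (hpm : p ∣ m) (a : ZMod m) :
    castHom hpm (ZMod p) a = 0 ↔ p ∣ a.val := by
  rw [castHom_apply, ZMod.cast_eq_val, ZMod.natCast_eq_zero_iff]

theorem ZMod.exists_eq_add_nsmul_of_castHom_eq {m p : ℕ} [NeZero m] (hpm : p ∣ m)
    {a b : ZMod m} (h : castHom hpm (ZMod p) a = castHom hpm (ZMod p) b) :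
    ∃ c : ZMod m, a = b + p • c := by
  obtain ⟨c, hc⟩ := (castHom_eq_zero_iff_dvd_val hpm (a - b)).1 (by rw [map_sub, h, sub_self])
  refine ⟨c, ?_⟩
  rw [nsmul_eq_mul, ← Nat.cast_mul, ← hc, ZMod.natCast_zmod_val, add_sub_cancel]

section Restrict

variable {ι A : Type*} (s : Finset ι)

def Finset.restrictAddHom [AddMonoid A] : (ι → A) →+ (s → A) where
  toFun := s.restrict
  map_zero' := rfl
  map_add' _ _ := rfl

@[simp]
theorem Finset.coe_restrictAddHom [AddMonoid A] : ⇑(s.restrictAddHom (A := A)) = s.restrict :=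
  rfl

theorem Finset.restrict_surjective [Nonempty A] :
    Function.Surjective (s.restrict (π := fun _ : ι => A)) :=
  Subtype.val_injective.surjective_comp_right

theorem Finset.restrict_preimage_singleton_restrict (a : ι → A) :
    s.restrict ⁻¹' ({s.restrict a} : Set (s → A)) = {x | ∀ i ∈ s, x i = a i} := by
  ext x; simp [funext_iff]

end Restrict

namespace IsUniformBernoulli

variable {m : ℕ} {μ ν : Measure (ℤ → ZMod m)}

theorem measure_restrict_preimage_singleton (hμ : IsUniformBernoulli m μ) (s : Finset ℤ)
    (a : s → ZMod m) : μ (s.restrict ⁻¹' {a}) = (m : ℝ≥0∞)⁻¹ ^ s.card := by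
  obtain ⟨b, rfl⟩ := s.restrict_surjective a
  rw [s.restrict_preimage_singleton_restrict, hμ.2]

theorem unique [NeZero m] (hμ : IsUniformBernoulli m μ) (hν : IsUniformBernoulli m ν) : μ = ν := by
  have := hμ.1
  refine ext_of_generate_finite _ generateFrom_measurableCylinders.symm
    isPiSystem_measurableCylinders (fun t ht => ?_) (by simp [hν.1.measure_univ])
  obtain ⟨s, S, hS, rfl⟩ := (mem_measurableCylinders t).1 ht
  have hrestrict := s.measurable_restrict (X := fun _ : ℤ => ZMod m)
  have hmap : μ.map s.restrict = ν.map s.restrict := Measure.ext_iff_singleton.2 fun a => by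
    rw [Measure.map_apply hrestrict (measurableSet_singleton a),
      Measure.map_apply hrestrict (measurableSet_singleton a),
      hμ.measure_restrict_preimage_singleton, hν.measure_restrict_preimage_singleton]
  rw [cylinder, ← Measure.map_apply hrestrict hS, hmap, Measure.map_apply hrestrict hS]

theorem map_add_left (hμ : IsUniformBernoulli m μ) (z : ℤ → ZMod m) :
    IsUniformBernoulli m (μ.map (z + ·)) := by
  have := hμ.1
  refine ⟨Measure.isProbabilityMeasure_map (measurable_const_add z).aemeasurable, fun s a => ?_⟩
  rw [← s.restrict_preimage_singleton_restrict, Measure.map_apply (measurable_const_add z)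
    (s.measurable_restrict (measurableSet_singleton _)), s.restrict_preimage_singleton_restrict]
  convert hμ.2 s (-z + a) using 2
  ext x; simp [eq_neg_add_iff_add_eq]

theorem isAddLeftInvariant [NeZero m] (hμ : IsUniformBernoulli m μ) : μ.IsAddLeftInvariant :=
  ⟨fun z => (hμ.map_add_left z).unique hμ⟩

theorem measurePreserving_of_surjective [NeZero m] (hμ : IsUniformBernoulli m μ)
    {T : (ℤ → ZMod m) →+ (ℤ → ZMod m)} (hT : Measurable T) (hT_surj : Function.Surjective T) :
    MeasurePreserving T μ μ := by
  have := hμ.1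
  have := hμ.isAddLeftInvariant
  refine ⟨hT, IsUniformBernoulli.unique ⟨Measure.isProbabilityMeasure_map hT.aemeasurable,
    fun s a => ?_⟩ hμ⟩
  rw [← s.restrict_preimage_singleton_restrict, Measure.map_apply hT
    (s.measurable_restrict (measurableSet_singleton _)), ← preimage_comp,
    ← Finset.coe_restrictAddHom, ← AddMonoidHom.coe_comp,
    measure_preimage_singleton_eq_inv_card ((s.measurable_restrict).comp hT)
      ((s.restrict_surjective).comp hT_surj)]
  simp [ZMod.card, ENNReal.inv_pow]

end IsUniformBernoulli

section CellularAutomaton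

variable {m : ℕ} {l r : ℤ} {lam : ℤ → ZMod m}

noncomputable def cellAutoHom (m : ℕ) (l r : ℤ) (lam : ℤ → ZMod m) :
    AddMonoid.End (ℤ → ZMod m) where
  toFun := cellAuto m l r lam
  map_zero' := by ext; simp [cellAuto]
  map_add' x y := by ext; simp [cellAuto, mul_add, Finset.sum_add_distrib]

theorem measurable_cellAuto [NeZero m] : Measurable (cellAuto m l r lam) :=
  measurable_pi_lambda _ fun i => by unfold cellAuto; fun_prop

variable [NeZero m] {p : ℕ} (hpm : p ∣ m) {j₀ : ℤ}

theorem castHom_cellAuto (hj₀ : l ≤ j₀ ∧ j₀ ≤ r ∧ ¬ p ∣ (lam j₀).val)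
    (huniq : ∀ j, l ≤ j ∧ j ≤ r ∧ ¬ p ∣ (lam j).val → j = j₀) (x : ℤ → ZMod m) (i : ℤ) :
    ZMod.castHom hpm (ZMod p) (cellAuto m l r lam x i) =
      ZMod.castHom hpm (ZMod p) (lam j₀) * ZMod.castHom hpm (ZMod p) (x (i + j₀)) := by
  unfold cellAuto
  rw [map_sum, Finset.sum_eq_single_of_mem j₀ (Finset.mem_Icc.2 ⟨hj₀.1, hj₀.2.1⟩),
    map_mul]
  intro j hj hne
  have hdvd : p ∣ (lam j).val := by
    by_contra h
    exact hne (huniq j ⟨(Finset.mem_Icc.1 hj).1, (Finset.mem_Icc.1 hj).2, h⟩)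
  rw [map_mul, (ZMod.castHom_eq_zero_iff_dvd_val hpm _).2 hdvd, zero_mul]

theorem castHom_iterate_cellAuto (hj₀ : l ≤ j₀ ∧ j₀ ≤ r ∧ ¬ p ∣ (lam j₀).val)
    (huniq : ∀ j, l ≤ j ∧ j ≤ r ∧ ¬ p ∣ (lam j).val → j = j₀) (n : ℕ) (x : ℤ → ZMod m) (i : ℤ) :
    ZMod.castHom hpm (ZMod p) ((cellAuto m l r lam)^[n] x i) =
      ZMod.castHom hpm (ZMod p) (lam j₀) ^ n * ZMod.castHom hpm (ZMod p) (x (i + n * j₀)) := by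
  induction n generalizing x with
  | zero => simp
  | succ n ih =>
    rw [Function.iterate_succ_apply, ih, castHom_cellAuto hpm hj₀ huniq,
      show i + n * j₀ + j₀ = i + (n + 1 : ℕ) * j₀ by push_cast; ring, pow_succ, mul_assoc]

theorem eventually_forall_exists_castHom_iterate_eq (hj₀ : l ≤ j₀ ∧ j₀ ≤ r ∧ ¬ p ∣ (lam j₀).val)
    (huniq : ∀ j, l ≤ j ∧ j ≤ r ∧ ¬ p ∣ (lam j).val → j = j₀) (hp : p.Prime) (hj₀_ne : j₀ ≠ 0)
    (s t : Finset ℤ) :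
    ∀ᶠ n in atTop, ∀ b c : ℤ → ZMod m, ∃ x : ℤ → ZMod m,
      (∀ i ∈ s, ZMod.castHom hpm (ZMod p) ((cellAuto m l r lam)^[n] x i) =
        ZMod.castHom hpm (ZMod p) (b i)) ∧ ∀ i ∈ t, x i = c i := by
  have := Fact.mk hp
  have hfar : ∀ᶠ n : ℕ in atTop, ∀ i ∈ s, i + n * j₀ ∉ t := by
    refine (eventually_all_finset s).2 fun i _ => ?_
    filter_upwards [eventually_gt_atTop (t.sup fun i' => (i' - i).natAbs)] with n hn hmem
    have hle := Finset.le_sup (f := fun i' => (i' - i).natAbs) hmem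
    simp only [add_sub_cancel_left, Int.natAbs_mul, Int.natAbs_natCast] at hle
    nlinarith [Int.natAbs_pos.2 hj₀_ne]
  filter_upwards [hfar] with n hn b c
  -- modulo `p`, `(Tⁿ x) i = λ_{j₀}ⁿ · x (i + n j₀)`, and the sites `i + n j₀` with `i ∈ s` avoid `t`
  have hunit : ZMod.castHom hpm (ZMod p) (lam j₀) ≠ 0 :=
    (ZMod.castHom_eq_zero_iff_dvd_val hpm _).not.2 hj₀.2.2
  obtain ⟨u, hu⟩ := ZMod.castHom_surjective hpm (ZMod.castHom hpm (ZMod p) (lam j₀) ^ n)⁻¹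
  refine ⟨fun i => if i ∈ t then c i else u * b (i - n * j₀), fun i hi => ?_,
    fun i hi => if_pos hi⟩
  rw [castHom_iterate_cellAuto hpm hj₀ huniq, if_neg (hn i hi), add_sub_cancel_right, map_mul,
    hu, ← mul_assoc, mul_inv_cancel₀ (pow_ne_zero _ hunit), one_mul]

variable {μ : Measure (ℤ → ZMod m)}

theorem eventually_surjective_restrict_iterate_prod_restrict
    (hinv : ∀ p : ℕ, p.Prime → p ∣ m → ∃! j : ℤ, l ≤ j ∧ j ≤ r ∧ ¬ p ∣ (lam j).val)
    (hzero : ∀ p : ℕ, p.Prime → p ∣ m → ¬ (l ≤ 0 ∧ 0 ≤ r ∧ ¬ p ∣ (lam 0).val))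
    (s t : Finset ℤ) :
    ∀ᶠ n in atTop, Function.Surjective
      ((s.restrictAddHom.comp (cellAutoHom m l r lam ^ n)).prod t.restrictAddHom) := by
  have hmodp : ∀ᶠ n in atTop, ∀ p ∈ m.primeFactors, ∀ (hpm : p ∣ m) (b c : ℤ → ZMod m),
      ∃ x : ℤ → ZMod m, (∀ i ∈ s, ZMod.castHom hpm (ZMod p) ((cellAuto m l r lam)^[n] x i) =
        ZMod.castHom hpm (ZMod p) (b i)) ∧ ∀ i ∈ t, x i = c i := by
    refine (eventually_all_finset m.primeFactors).2 fun p hp => ?_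
    have hp' := Nat.prime_of_mem_primeFactors hp
    obtain ⟨j₀, hj₀, huniq⟩ := hinv p hp' (Nat.dvd_of_mem_primeFactors hp)
    filter_upwards [eventually_forall_exists_castHom_iterate_eq (Nat.dvd_of_mem_primeFactors hp)
      hj₀ huniq hp' (fun h => hzero p hp' (Nat.dvd_of_mem_primeFactors hp) (h ▸ hj₀)) s t]
      with n hn hpm using hn
  filter_upwards [hmodp] with n hn
  refine AddMonoidHom.surjective_of_forall_prime_dvd _ (NeZero.ne m)
    (fun v => by ext <;> simp) fun p hp hpm ⟨b, c⟩ => ?_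
  obtain ⟨b, rfl⟩ := s.restrict_surjective b
  obtain ⟨c, rfl⟩ := t.restrict_surjective c
  obtain ⟨x, hxs, hxt⟩ := hn p (Nat.mem_primeFactors.2 ⟨hp, hpm, NeZero.ne m⟩) hpm b c
  choose w hw using fun i : s => ZMod.exists_eq_add_nsmul_of_castHom_eq hpm (hxs i i.2).symm
  refine ⟨x, (w, 0), ?_⟩
  ext i
  · exact hw i
  · simp [hxt i i.2]

theorem eventually_measure_preimage_iterate_inter_self (hμ : IsUniformBernoulli m μ)
    (hbij : Function.Bijective (cellAuto m l r lam))
    (hinv : ∀ p : ℕ, p.Prime → p ∣ m → ∃! j : ℤ, l ≤ j ∧ j ≤ r ∧ ¬ p ∣ (lam j).val)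
    (hzero : ∀ p : ℕ, p.Prime → p ∣ m → ¬ (l ≤ 0 ∧ 0 ≤ r ∧ ¬ p ∣ (lam 0).val))
    {B : Set (ℤ → ZMod m)} (hB : B ∈ measurableCylinders fun _ : ℤ => ZMod m) :
    ∀ᶠ n in atTop, μ ((cellAuto m l r lam)^[n] ⁻¹' B ∩ B) = μ B * μ B := by
  have := hμ.1
  have := hμ.isAddLeftInvariant
  obtain ⟨s, S, hS, rfl⟩ := (mem_measurableCylinders B).1 hB
  have hT : MeasurePreserving (cellAuto m l r lam) μ μ :=
    hμ.measurePreserving_of_surjective (T := cellAutoHom m l r lam) measurable_cellAuto hbij.2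
  filter_upwards [eventually_surjective_restrict_iterate_prod_restrict hinv hzero s s] with n hn
  have hTn := hT.iterate n
  have h : μ ((cellAuto m l r lam)^[n] ⁻¹' cylinder s S ∩ cylinder s S) =
      μ ((cellAuto m l r lam)^[n] ⁻¹' cylinder s S) * μ (cylinder s S) :=
    measure_preimage_inter_preimage_eq_mul ((s.measurable_restrict).comp hTn.measurable)
      s.measurable_restrict hn S S
  rw [h, hTn.measure_preimage (hS.cylinder s).nullMeasurableSet]

theorem isErgodic_cellAuto (hμ : IsUniformBernoulli m μ)
    (hbij : Function.Bijective (cellAuto m l r lam))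
    (hinv : ∀ p : ℕ, p.Prime → p ∣ m → ∃! j : ℤ, l ≤ j ∧ j ≤ r ∧ ¬ p ∣ (lam j).val)
    (hzero : ∀ p : ℕ, p.Prime → p ∣ m → ¬ (l ≤ 0 ∧ 0 ≤ r ∧ ¬ p ∣ (lam 0).val)) :
    IsErgodic (cellAuto m l r lam) μ :=
  have := hμ.1
  isErgodic_of_generateFrom_isSetRing
    (hμ.measurePreserving_of_surjective (T := cellAutoHom m l r lam) measurable_cellAuto hbij.2)
    isSetRing_measurableCylinders (univ_mem_measurableCylinders _)
    generateFrom_measurableCylinders.symm fun _ hB =>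
      (eventually_measure_preimage_iterate_inter_self hμ hbij hinv hzero hB).exists

theorem not_isErgodic_cellAuto (hμ : IsUniformBernoulli m μ) {p : ℕ} (hp : p.Prime)
    (hpm : p ∣ m) (h₀ : l ≤ 0 ∧ 0 ≤ r ∧ ¬ p ∣ (lam 0).val)
    (huniq : ∀ j, l ≤ j ∧ j ≤ r ∧ ¬ p ∣ (lam j).val → j = 0) :
    ¬ IsErgodic (cellAuto m l r lam) μ := by
  have := Fact.mk hp
  have := hμ.1
  have := hμ.isAddLeftInvariant
  let φ : (ℤ → ZMod m) →+ ZMod p := AddMonoidHom.mk'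
    (fun x => ZMod.castHom hpm (ZMod p) (x 0) - ZMod.castHom hpm (ZMod p) (x 1))
    fun x y => by simp only [Pi.add_apply, map_add]; abel
  have hφ : Measurable φ :=
    ((Measurable.of_discrete).comp (measurable_pi_apply 0)).sub
      ((Measurable.of_discrete).comp (measurable_pi_apply 1))
  have hφ_surj : Function.Surjective φ := fun y => by
    obtain ⟨a, rfl⟩ := ZMod.castHom_surjective hpm y
    exact ⟨Pi.single 0 a, by simp [φ]⟩
  have hunit : ZMod.castHom hpm (ZMod p) (lam 0) ≠ 0 :=
    (ZMod.castHom_eq_zero_iff_dvd_val hpm _).not.2 h₀.2.2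
  have hφT : ∀ x, φ (cellAuto m l r lam x) = ZMod.castHom hpm (ZMod p) (lam 0) * φ x := by
    intro x
    simp only [φ, AddMonoidHom.mk'_apply]
    rw [castHom_cellAuto hpm h₀ huniq, castHom_cellAuto hpm h₀ huniq, add_zero, add_zero, mul_sub]
  intro herg
  have h := herg (φ ⁻¹' {0}) (hφ (measurableSet_singleton 0)) (by
    ext x; simp only [mem_preimage, mem_singleton_iff, hφT, mul_eq_zero, hunit, false_or])
  rw [measure_preimage_singleton_eq_inv_card hφ hφ_surj, ZMod.card] at h
  simp [hp.one_lt.ne'] at h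

end CellularAutomaton

theorem invertible_not_ergodic_iff_general
    (m : ℕ) (hm : 2 ≤ m) (l r : ℤ) (lam : ℤ → ZMod m)
    (μ : Measure (ℤ → ZMod m)) (hμ : IsUniformBernoulli m μ)
    (hbij : Function.Bijective (cellAuto m l r lam))
    (hinv : ∀ p : ℕ, p.Prime → p ∣ m →
      ∃! j : ℤ, l ≤ j ∧ j ≤ r ∧ ¬ (p : ℕ) ∣ (lam j).val) :
    ¬ IsErgodic (cellAuto m l r lam) μ ↔
      ∃ p : ℕ, p.Prime ∧ p ∣ m ∧ (l ≤ 0 ∧ (0 : ℤ) ≤ r ∧ ¬ (p : ℕ) ∣ (lam 0).val) := by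
  have : NeZero m := ⟨by omega⟩
  constructor
  · intro hne
    by_contra hzero
    exact hne (isErgodic_cellAuto hμ hbij hinv fun p hp hpm h => hzero ⟨p, hp, hpm, h⟩)
  · rintro ⟨p, hp, hpm, h₀⟩
    obtain ⟨j₀, -, huniq⟩ := hinv p hp hpm
    exact not_isErgodic_cellAuto hμ hp hpm h₀ fun j hj => (huniq j hj).trans (huniq 0 h₀).symm

/-- An invertible linear cellular automaton (for each prime factor `p` of `m` there is a
unique index `j_p` with `p ∤ λ_{j_p}`) fails to be ergodic with respect to the uniform
Bernoulli measure iff `j_p = 0` for some prime factor `p` of `m`. -/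
theorem invertible_not_ergodic_iff
    (m : ℕ) (hm : 2 ≤ m) (l r : ℤ) (hlr : l ≤ r) (lam : ℤ → ZMod m)
    (μ : Measure (ℤ → ZMod m)) (hμ : IsUniformBernoulli m μ)
    (hbij : Function.Bijective (cellAuto m l r lam))
    (hinv : ∀ p : ℕ, p.Prime → p ∣ m →
      ∃! j : ℤ, l ≤ j ∧ j ≤ r ∧ ¬ (p : ℕ) ∣ (lam j).val) :
    ¬ IsErgodic (cellAuto m l r lam) μ ↔
      ∃ p : ℕ, p.Prime ∧ p ∣ m ∧ (l ≤ 0 ∧ (0 : ℤ) ≤ r ∧ ¬ (p : ℕ) ∣ (lam 0).val) :=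
  invertible_not_ergodic_iff_general m hm l r lam μ hμ hbij hinv
end

section
/- Let p be a prime and k ≥ 1. Suppose F(X) = λ X^{-j} + p·H(X) in the Laurent polynomial ring (ZMod p^k)[X, X^{-1}], where λ is a unit of ZMod p^k, j ∈ ℤ, and H(X) is any Laurent polynomial. Then F(X)^{p^{k-1}} = λ^{p^k} X^{-p^{k-1} j} in (ZMod p^k)[X, X^{-1}]. -/
open LaurentPolynomial

/-- If `F(X) = λ X^{-j} + p H(X)` in `(ZMod p^k)[X, X^{-1}]` with `λ` a unit, then
`F(X)^{p^{k-1}} = λ^{p^k} X^{-p^{k-1} j}`. -/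
theorem laurent_pow_prime_pow
    (p k : ℕ) (hp : p.Prime) (hk : 1 ≤ k) (lam : (ZMod (p ^ k))ˣ) (j : ℤ)
    (H : LaurentPolynomial (ZMod (p ^ k))) :
    (C (lam : ZMod (p ^ k)) * T (-j) + C (p : ZMod (p ^ k)) * H) ^ (p ^ (k - 1)) =
      C ((lam : ZMod (p ^ k)) ^ (p ^ k)) * T (-((p ^ (k - 1) : ℕ) * j)) := by
  set R := ZMod (p ^ k)
  set a : LaurentPolynomial R := C (lam : R) * T (-j)
  set b : LaurentPolynomial R := C (p : R) * H
  -- the difference is divisible by p^k, which is 0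
  have hdvd : ((p : LaurentPolynomial R) ^ ((k - 1) + 1)) ∣
      (a + b) ^ p ^ (k - 1) - a ^ p ^ (k - 1) := by
    apply dvd_sub_pow_of_dvd_sub
    rw [add_sub_cancel_left]
    exact ⟨H, by show C (p : R) * H = ↑p * H; rw [map_natCast (C : R →+* LaurentPolynomial R)]⟩
  rw [Nat.sub_add_cancel hk] at hdvd
  have hp0 : ((p : LaurentPolynomial R) ^ k) = 0 := by
    have h0 : ((p ^ k : ℕ) : R) = 0 := ZMod.natCast_self _
    rw [← Nat.cast_pow, ← map_natCast (C : R →+* LaurentPolynomial R), h0, map_zero]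
  rw [hp0] at hdvd
  obtain ⟨c, hc⟩ := hdvd
  rw [zero_mul, sub_eq_zero] at hc
  rw [hc, mul_pow, T_pow, ← map_pow]
  -- now show λ^{p^{k-1}} = λ^{p^k}
  have hlam : lam ^ (p ^ (k - 1)) = lam ^ (p ^ k) := by
    have htot : lam ^ Nat.totient (p ^ k) = 1 := ZMod.pow_totient lam
    have hpk : p ^ k = Nat.totient (p ^ k) + p ^ (k - 1) := by
      rw [Nat.totient_prime_pow hp hk]
      obtain ⟨q, rfl⟩ : ∃ q, p = q + 1 := ⟨p - 1, by have := hp.pos; omega⟩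
      obtain ⟨m, rfl⟩ : ∃ m, k = m + 1 := ⟨k - 1, by omega⟩
      simp only [Nat.add_sub_cancel]
      rw [pow_succ]
      ring
    have := congrArg (fun e => lam ^ e) hpk
    simp only [pow_add, htot, one_mul] at this
    exact this.symm
  have hval : ((lam : R)) ^ (p ^ (k - 1)) = (lam : R) ^ (p ^ k) := by
    rw [← Units.val_pow_eq_pow_val, ← Units.val_pow_eq_pow_val, hlam]
  rw [hval]
  push_cast
  ring_nf
end

section
/- Let m = p^k for a prime p and k ≥ 1, and let T_f be an invertible linear cellular automaton on (ZMod p^k)^ℤ with local rule f(x_l,…,x_r) = Σ_{i=l}^{r} λ_i x_i (mod p^k), where j_p is the unique index with p ∤ λ_{j_p} and λ = λ_{j_p}. Then for every ℓ ∈ ℕ, every x ∈ (ZMod p^k)^ℤ, and every i ∈ ℤ, one has (T_f^{ℓ p^{k-1}} x)_i = λ^{ℓ p^k} · x_{i + ℓ p^{k-1} j_p}; that is, T_f^{ℓ p^{k-1}} acts as multiplication by the unit λ^{ℓ p^k} composed with the shift by ℓ p^{k-1} j_p. -/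
open AddMonoidAlgebra

theorem pow_prime_pow_eq_of_dvd_sub {R : Type*} [CommRing R] {p k : ℕ} {a b : R}
    (hchar : (p : R) ^ (k + 1) = 0) (h : (p : R) ∣ a - b) : a ^ p ^ k = b ^ p ^ k := by
  have := dvd_sub_pow_of_dvd_sub h k
  rwa [hchar, zero_dvd_iff, sub_eq_zero] at this

namespace ZMod

theorem natCast_dvd_of_dvd_val {n d : ℕ} [NeZero n] {a : ZMod n} (h : d ∣ a.val) :
    (d : ZMod n) ∣ a := by
  simpa only [natCast_val, cast_id] using Nat.cast_dvd_cast (α := ZMod n) h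

theorem isUnit_of_prime_not_dvd_val {p k : ℕ} (hp : p.Prime) {a : ZMod (p ^ k)}
    (h : ¬ p ∣ a.val) : IsUnit a := by
  have : NeZero p := ⟨hp.ne_zero⟩
  have hcop : a.val.Coprime (p ^ k) := (hp.coprime_iff_not_dvd.mpr h).symm.pow_right k
  simpa only [natCast_val, cast_id] using (isUnit_iff_coprime a.val (p ^ k)).mpr hcop

theorem pow_add_totient_of_isUnit {n : ℕ} {u : ZMod n} (hu : IsUnit u) (a : ℕ) :
    u ^ (a + n.totient) = u ^ a := by
  obtain ⟨v, rfl⟩ := hu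
  rw [pow_add, ← Units.val_pow_eq_pow_val v n.totient, pow_totient, Units.val_one, mul_one]

theorem pow_prime_pow_succ_of_isUnit {p k : ℕ} (hp : p.Prime) {u : ZMod (p ^ (k + 1))}
    (hu : IsUnit u) : u ^ p ^ (k + 1) = u ^ p ^ k := by
  have hsplit : p ^ (k + 1) = p ^ k + (p ^ (k + 1)).totient := by
    rw [Nat.totient_prime_pow_succ hp, pow_succ]
    zify [hp.one_le]
    ring
  calc u ^ p ^ (k + 1) = u ^ (p ^ k + (p ^ (k + 1)).totient) := by rw [← hsplit]
    _ = u ^ p ^ k := pow_add_totient_of_isUnit hu _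

end ZMod

theorem AddMonoidAlgebra.natCast_dvd_single {R G : Type*} [Semiring R] [AddMonoid G]
    {n : ℕ} {a : R} (h : (n : R) ∣ a) (g : G) : (n : R[G]) ∣ single g a := by
  obtain ⟨c, rfl⟩ := h
  exact ⟨single g c, by rw [natCast_def, single_mul_single, zero_add]⟩

namespace LinearCellularAutomaton

section Action

variable (R : Type*) [CommSemiring R]

def shiftHom : Multiplicative ℤ →* Module.End R (ℤ → R) where
  toFun j := LinearMap.funLeft R R (· + j.toAdd)
  map_one' := by ext x i; simp
  map_mul' j j' := by
    ext x i
    simp only [toAdd_mul, LinearMap.funLeft_apply, Module.End.mul_apply]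
    congr 1
    abel

noncomputable def laurentAct : R[ℤ] →ₐ[R] Module.End R (ℤ → R) :=
  AddMonoidAlgebra.lift R (Module.End R (ℤ → R)) ℤ (shiftHom R)

variable {R}

theorem laurentAct_single_apply (j : ℤ) (a : R) (x : ℤ → R) (i : ℤ) :
    laurentAct R (single j a) x i = a * x (i + j) := by
  simp only [laurentAct, lift_single, shiftHom, LinearMap.smul_apply, MonoidHom.coe_mk,
    OneHom.coe_mk, toAdd_ofAdd, LinearMap.funLeft_apply, Pi.smul_apply, smul_eq_mul]

end Action

noncomputable def rulePoly {R : Type*} [Semiring R] (l r : ℤ) (lam : ℤ → R) : R[ℤ] :=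
  ∑ j ∈ Finset.Icc l r, single j (lam j)

theorem natCast_dvd_rulePoly_sub_single {R : Type*} [Ring R] {n : ℕ} {l r jp : ℤ}
    {lam : ℤ → R} (hjp : jp ∈ Finset.Icc l r)
    (hdvd : ∀ j ∈ Finset.Icc l r, j ≠ jp → (n : R) ∣ lam j) :
    (n : R[ℤ]) ∣ rulePoly l r lam - single jp (lam jp) := by
  rw [rulePoly, ← Finset.add_sum_erase _ _ hjp, add_sub_cancel_left]
  refine Finset.dvd_sum fun j hj => natCast_dvd_single ?_ j
  exact hdvd j (Finset.mem_of_mem_erase hj) (Finset.ne_of_mem_erase hj)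

theorem cellAuto_eq_laurentAct {m : ℕ} (l r : ℤ) (lam : ℤ → ZMod m) :
    cellAuto m l r lam = laurentAct (ZMod m) (rulePoly l r lam) := by
  ext x i
  simp only [rulePoly, map_sum, LinearMap.sum_apply, Finset.sum_apply, laurentAct_single_apply,
    cellAuto]

theorem cellAuto_iterate {m : ℕ} (l r : ℤ) (lam : ℤ → ZMod m) (n : ℕ) :
    (cellAuto m l r lam)^[n] = laurentAct (ZMod m) (rulePoly l r lam ^ n) := by
  rw [map_pow, Module.End.coe_pow, cellAuto_eq_laurentAct]

end LinearCellularAutomaton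

open LinearCellularAutomaton in
theorem iterate_mul_prime_pow_eq_shift_general
    (p k : ℕ) (hp : p.Prime) (hk : 1 ≤ k) (l r jp : ℤ)
    (lam : ℤ → ZMod (p ^ k))
    (hjp : l ≤ jp ∧ jp ≤ r ∧ ¬ (p : ℕ) ∣ (lam jp).val)
    (huniq : ∀ j : ℤ, l ≤ j → j ≤ r → ¬ (p : ℕ) ∣ (lam j).val → j = jp) :
    ∀ (ℓ : ℕ) (x : ℤ → ZMod (p ^ k)) (i : ℤ),
      (cellAuto (p ^ k) l r lam)^[ℓ * p ^ (k - 1)] x i =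
        (lam jp) ^ (ℓ * p ^ k) * x (i + ((ℓ * p ^ (k - 1) : ℕ) : ℤ) * jp) := by
  obtain ⟨hljp, hjpr, hndvd⟩ := hjp
  obtain ⟨k, rfl⟩ := Nat.exists_eq_add_of_le' hk
  have : NeZero p := ⟨hp.ne_zero⟩
  intro ℓ x i
  have hdvd : ((p : ℕ) : (ZMod (p ^ (k + 1)))[ℤ]) ∣ rulePoly l r lam - single jp (lam jp) :=
    natCast_dvd_rulePoly_sub_single (Finset.mem_Icc.mpr ⟨hljp, hjpr⟩) fun j hj hne =>
      ZMod.natCast_dvd_of_dvd_val <| not_not.mp fun h =>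
        hne (huniq j (Finset.mem_Icc.mp hj).1 (Finset.mem_Icc.mp hj).2 h)
  have hchar : ((p : ℕ) : (ZMod (p ^ (k + 1)))[ℤ]) ^ (k + 1) = 0 := by
    rw [← Nat.cast_pow, ← map_natCast (algebraMap (ZMod (p ^ (k + 1))) _), ZMod.natCast_self,
      map_zero]
  have hpow := pow_prime_pow_eq_of_dvd_sub hchar hdvd
  rw [Nat.add_sub_cancel, cellAuto_iterate, pow_mul', hpow, ← pow_mul', single_pow,
    laurentAct_single_apply, pow_mul, pow_mul, ZMod.pow_prime_pow_succ_of_isUnit hp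
      ((ZMod.isUnit_of_prime_not_dvd_val hp hndvd).pow ℓ), nsmul_eq_mul]

/-- For an invertible linear cellular automaton over `ZMod p^k` with unique permutative
index `j_p` (and `λ = λ_{j_p}`), the iterate `T_f^{ℓ p^{k-1}}` acts as multiplication by
the unit `λ^{ℓ p^k}` composed with the shift by `ℓ p^{k-1} j_p`:
`(T_f^{ℓ p^{k-1}} x)_i = λ^{ℓ p^k} · x_{i + ℓ p^{k-1} j_p}`. -/
theorem iterate_mul_prime_pow_eq_shift
    (p k : ℕ) (hp : p.Prime) (hk : 1 ≤ k) (l r jp : ℤ) (hlr : l ≤ r)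
    (lam : ℤ → ZMod (p ^ k))
    (hjp : l ≤ jp ∧ jp ≤ r ∧ ¬ (p : ℕ) ∣ (lam jp).val)
    (huniq : ∀ j : ℤ, l ≤ j → j ≤ r → ¬ (p : ℕ) ∣ (lam j).val → j = jp) :
    ∀ (ℓ : ℕ) (x : ℤ → ZMod (p ^ k)) (i : ℤ),
      (cellAuto (p ^ k) l r lam)^[ℓ * p ^ (k - 1)] x i =
        (lam jp) ^ (ℓ * p ^ k) * x (i + ((ℓ * p ^ (k - 1) : ℕ) : ℤ) * jp) :=
  iterate_mul_prime_pow_eq_shift_general p k hp hk l r jp lam hjp huniq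
end

section
/- Let m = p^k for a prime p and k ≥ 1, and let T_f be an invertible linear cellular automaton on (ZMod p^k)^ℤ with local rule f(x_l,…,x_r) = Σ_{i=l}^{r} λ_i x_i (mod p^k) and unique permutative index j_p, with associated Laurent polynomial F(X) = Σ_{i=l}^{r} λ_i X^{-i}. If n = ℓ p^{k-1} + ℓ' with ℓ ∈ ℕ and 1 ≤ ℓ' < p^{k-1}, then the coefficient of X^{-i} in F(X)^n vanishes for every i outside the interval [ℓ p^{k-1} j_p + ℓ' l, ℓ p^{k-1} j_p + ℓ' r]; equivalently, the local rule of T_f^n depends only on the coordinates with indices in that interval. -/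
open LaurentPolynomial

/-!
All coefficients of `F` except `λ_{j_p}` are divisible by `p`, so `F ≡ λ_{j_p} X^{-j_p} (mod p)`.
Since `a ≡ b (mod p)` implies `a ^ p^(k-1) ≡ b ^ p^(k-1) (mod p^k)`, over `ZMod p^k` the power
`F ^ p^(k-1)` is the monomial `(λ_{j_p} X^{-j_p}) ^ p^(k-1)`. Hence `F^n` is a monomial of exponent
`-ℓ p^(k-1) j_p` times `F^ℓ'`, whose exponents lie in `[-ℓ' r, -ℓ' l]`.
-/

theorem ZMod.natCast_dvd_of_dvd_val_s9 {m p : ℕ} [NeZero m] {x : ZMod m} (h : p ∣ x.val) :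
    (p : ZMod m) ∣ x := by
  simpa only [ZMod.natCast_zmod_val] using Nat.cast_dvd_cast (α := ZMod m) h

theorem Finset.dvd_sum_sub_of_dvd {α A : Type*} [CommRing A] [DecidableEq α] {s : Finset α}
    {j : α} (hj : j ∈ s) {f : α → A} {d : A} (h : ∀ i ∈ s, i ≠ j → d ∣ f i) :
    d ∣ ∑ i ∈ s, f i - f j := by
  rw [← Finset.add_sum_erase s f hj, add_sub_cancel_left]
  exact Finset.dvd_sum fun i hi => h i (Finset.mem_of_mem_erase hi) (Finset.ne_of_mem_erase hi)

theorem pow_pow_sub_one_eq_of_dvd_sub {R : Type*} [CommRing R] {p k : ℕ} (hpk : (p : R) ^ k = 0)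
    {a b : R} (h : (p : R) ∣ a - b) : a ^ p ^ (k - 1) = b ^ p ^ (k - 1) := by
  have := dvd_sub_pow_of_dvd_sub h (k - 1)
  rwa [pow_eq_zero_of_le (by omega) hpk, zero_dvd_iff, sub_eq_zero] at this

namespace LaurentPolynomial

variable {R : Type*} [Semiring R]

theorem support_coeff_mul_subset_Icc {f g : R[T;T⁻¹]} {a b c d : ℤ}
    (hf : f.coeff.support ⊆ Finset.Icc a b) (hg : g.coeff.support ⊆ Finset.Icc c d) :
    (f * g).coeff.support ⊆ Finset.Icc (a + c) (b + d) :=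
  (AddMonoidAlgebra.support_coeff_mul_subset f g).trans
    ((Finset.add_subset_add hf hg).trans (Finset.Icc_add_Icc_subset a b c d))

theorem support_coeff_pow_subset_Icc {f : R[T;T⁻¹]} {a b : ℤ}
    (hf : f.coeff.support ⊆ Finset.Icc a b) (n : ℕ) :
    (f ^ n).coeff.support ⊆ Finset.Icc (n * a) (n * b) := by
  induction n with
  | zero => simpa using support_C_mul_T (1 : R) 0
  | succ n ih =>
    rw [pow_succ, Nat.cast_succ, add_one_mul, add_one_mul]
    exact support_coeff_mul_subset_Icc ih hf

theorem support_coeff_sum_C_mul_T_neg_subset (l r : ℤ) (g : ℤ → R) :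
    (∑ i ∈ Finset.Icc l r, C (g i) * T (-i)).coeff.support ⊆ Finset.Icc (-r) (-l) := by
  intro x hx
  rw [AddMonoidAlgebra.coeff_sum] at hx
  obtain ⟨i, hi, hx⟩ := Finsupp.mem_support_finsetSum x hx
  rw [Finset.mem_singleton.1 (support_C_mul_T _ _ hx)]
  simp only [Finset.mem_Icc] at hi ⊢
  omega

end LaurentPolynomial

theorem laurent_pow_coeff_support_general
    (p k : ℕ) (hp : p.Prime) (l r jp : ℤ)
    (lam : ℤ → ZMod (p ^ k))
    (hjp : l ≤ jp ∧ jp ≤ r ∧ ¬ (p : ℕ) ∣ (lam jp).val)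
    (huniq : ∀ j : ℤ, l ≤ j → j ≤ r → ¬ (p : ℕ) ∣ (lam j).val → j = jp)
    (ℓ ℓ' n : ℕ)
    (hn : n = ℓ * p ^ (k - 1) + ℓ') :
    ∀ i : ℤ,
      (i < ((ℓ * p ^ (k - 1) : ℕ) : ℤ) * jp + (ℓ' : ℤ) * l ∨
        ((ℓ * p ^ (k - 1) : ℕ) : ℤ) * jp + (ℓ' : ℤ) * r < i) →
      (((∑ i ∈ Finset.Icc l r, C (lam i) * T (-i)) ^ n :
          LaurentPolynomial (ZMod (p ^ k))).coeff : ℤ →₀ ZMod (p ^ k)) (-i) = 0 := by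
  have : NeZero (p ^ k) := ⟨pow_ne_zero k hp.ne_zero⟩
  obtain ⟨hjl, hjr, -⟩ := hjp
  set F : (ZMod (p ^ k))[T;T⁻¹] := ∑ i ∈ Finset.Icc l r, C (lam i) * T (-i)
  set M : (ZMod (p ^ k))[T;T⁻¹] := C (lam jp) * T (-jp)
  have hchar : (p : (ZMod (p ^ k))[T;T⁻¹]) ^ k = 0 := by
    rw [← Nat.cast_pow, ← map_natCast C, ZMod.natCast_self, map_zero]
  have hdvd : (p : (ZMod (p ^ k))[T;T⁻¹]) ∣ F - M :=
    Finset.dvd_sum_sub_of_dvd (Finset.mem_Icc.2 ⟨hjl, hjr⟩) fun i hi hne => by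
      obtain ⟨hil, hir⟩ := Finset.mem_Icc.1 hi
      have hpi : p ∣ (lam i).val := not_not.1 (mt (huniq i hil hir) hne)
      rw [← map_natCast C]
      exact (map_dvd C (ZMod.natCast_dvd_of_dvd_val_s9 hpi)).mul_right _
  have hFn : F ^ n = M ^ (ℓ * p ^ (k - 1)) * F ^ ℓ' := by
    rw [hn, pow_add, pow_mul', pow_mul', pow_pow_sub_one_eq_of_dvd_sub hchar hdvd]
  have hsupp := support_coeff_mul_subset_Icc
    (support_coeff_pow_subset_Icc (Finset.Icc_self (-jp) ▸ support_C_mul_T (lam jp) (-jp))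
      (ℓ * p ^ (k - 1)))
    (support_coeff_pow_subset_Icc (support_coeff_sum_C_mul_T_neg_subset l r lam) ℓ')
  rw [← hFn] at hsupp
  intro i hi
  refine Finsupp.notMem_support_iff.1 fun hmem => ?_
  obtain ⟨hlower, hupper⟩ := Finset.mem_Icc.1 (hsupp hmem)
  rcases hi with hi | hi <;> linarith

/-- Coefficient bounds for powers of the Laurent polynomial of an invertible linear
cellular automaton over `ZMod p^k`: if `n = ℓ p^{k-1} + ℓ'` with `1 ≤ ℓ' < p^{k-1}`,
then the coefficient of `X^{-i}` in `F(X)^n` (the value at `-i` of the underlying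
finitely supported function) vanishes for every `i` outside the interval
`[ℓ p^{k-1} j_p + ℓ' l, ℓ p^{k-1} j_p + ℓ' r]`. -/
theorem laurent_pow_coeff_support
    (p k : ℕ) (hp : p.Prime) (hk : 1 ≤ k) (l r jp : ℤ) (hlr : l ≤ r)
    (lam : ℤ → ZMod (p ^ k))
    (hjp : l ≤ jp ∧ jp ≤ r ∧ ¬ (p : ℕ) ∣ (lam jp).val)
    (huniq : ∀ j : ℤ, l ≤ j → j ≤ r → ¬ (p : ℕ) ∣ (lam j).val → j = jp)
    (ℓ ℓ' n : ℕ) (hℓ'₁ : 1 ≤ ℓ') (hℓ'₂ : ℓ' < p ^ (k - 1))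
    (hn : n = ℓ * p ^ (k - 1) + ℓ') :
    ∀ i : ℤ,
      (i < ((ℓ * p ^ (k - 1) : ℕ) : ℤ) * jp + (ℓ' : ℤ) * l ∨
        ((ℓ * p ^ (k - 1) : ℕ) : ℤ) * jp + (ℓ' : ℤ) * r < i) →
      (((∑ i ∈ Finset.Icc l r, C (lam i) * T (-i)) ^ n :
          LaurentPolynomial (ZMod (p ^ k))).coeff : ℤ →₀ ZMod (p ^ k)) (-i) = 0 :=
  laurent_pow_coeff_support_general p k hp l r jp lam hjp huniq ℓ ℓ' n hn
end

section
/- Let m = p^k for a prime p and k ≥ 1, and let T_f be an invertible linear cellular automaton on (ZMod p^k)^ℤ with local rule f(x_l,…,x_r) = Σ_{i=l}^{r} λ_i x_i (mod p^k), 0 ≤ l ≤ r, whose unique permutative index j_p satisfies j_p ≠ 0. Let ℓ be the smallest positive integer with 2ℓ ≥ r − l, and let ξ be the partition of (ZMod p^k)^ℤ into the cylinder sets determined by the coordinates −ℓ, −ℓ+1, …, ℓ. Then there exists an integer N > 0 such that for every n ≥ 0 the partitions ⋁_{i=−n}^{0} T_f^{i} ξ and ⋁_{i=N}^{N+n} T_f^{i}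 ξ are independent with respect to the uniform Bernoulli measure μ; that is, ξ is a Bernoulli partition for T_f. -/
/-!
Write `T_f` as the action of the Laurent polynomial `P = Σ λ_j X^j` on configurations, `X^t`
acting as the shift by `t`. Since `l ≥ 0`, the coordinates `-ℓ, …, ℓ` of `T_f^m x` only read
`x` on `[-ℓ, ℓ + m r]`, so the past join depends on coordinates `≥ -ℓ`.
Factor `P = X^{j_p} (λ_{j_p} + Q)`: all coefficients of `Q` are divisible by `p`, so `Q` is
nilpotent and `P⁻¹ = X^{-j_p} V` with `V` a polynomial in `Q`. All powers of `V` are polynomials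
in `Q` of degree below its nilpotency index, hence supported in one fixed window, and `T_f^{-m}`
reads a window of fixed width that drifts left at speed `j_p ≥ 1`. For `N` large the future join
therefore depends on coordinates `< -ℓ`, and events depending on disjoint finite sets of
coordinates are independent for the uniform Bernoulli measure.
-/

open MeasureTheory

/-- The atom of the cylinder partition `ξ` on coordinates `-ℓ, …, ℓ` determined by the
values `a`. -/
def cylAtom (m : ℕ) (ℓ : ℕ) (a : ℤ → ZMod m) : Set (ℤ → ZMod m) :=
  {x | ∀ i : ℤ, -(ℓ : ℤ) ≤ i → i ≤ (ℓ : ℤ) → x i = a i}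

/-- An atom of the join `⋁_{k=a}^{b} T^k ξ` of the partitions `T^k ξ`, `a ≤ k ≤ b`,
where `T` is the invertible map `E` and `ξ` is the cylinder partition on coordinates
`-ℓ, …, ℓ`: the atom is determined by a choice `c` of one atom of `ξ` for each time
`k ∈ [a, b]`. -/
def joinAtom (m : ℕ) (E : Equiv.Perm (ℤ → ZMod m)) (ℓ : ℕ) (a b : ℤ)
    (c : ℤ → (ℤ → ZMod m)) : Set (ℤ → ZMod m) :=
  ⋂ k ∈ Finset.Icc a b, (E ^ k : Equiv.Perm (ℤ → ZMod m)) '' cylAtom m ℓ (c k)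

lemma ZMod.isUnit_of_not_dvd_val {p k : ℕ} (hp : p.Prime) {x : ZMod (p ^ k)}
    (hx : ¬ p ∣ x.val) : IsUnit x := by
  have : NeZero (p ^ k) := ⟨pow_ne_zero _ hp.ne_zero⟩
  rw [← ZMod.natCast_zmod_val x, ZMod.isUnit_iff_coprime]
  exact (hp.coprime_iff_not_dvd.2 hx).symm.pow_right k

lemma ZMod.isNilpotent_of_dvd_val {p k : ℕ} [NeZero p] {x : ZMod (p ^ k)} (hx : p ∣ x.val) :
    IsNilpotent x := by
  obtain ⟨y, hy⟩ := hx
  refine ⟨k, ?_⟩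
  rw [← ZMod.natCast_zmod_val x, hy, Nat.cast_mul, mul_pow, ← Nat.cast_pow, ZMod.natCast_self,
    zero_mul]

open AddMonoidAlgebra Pointwise

theorem IsNilpotent.exists_mem_adjoin_mul_eq_one {R A : Type*} [CommRing R] [CommRing A]
    [Algebra R A] {Q : A} (hQ : IsNilpotent Q) (u : Rˣ) :
    ∃ V ∈ Algebra.adjoin R {Q}, (algebraMap R A u + Q) * V = 1 := by
  have hx : -((↑u⁻¹ : R) • Q) ∈ Algebra.adjoin R {Q} :=
    neg_mem (Subalgebra.smul_mem _ (Algebra.subset_adjoin (Set.mem_singleton Q)) _)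
  obtain ⟨n, hn⟩ : IsNilpotent (-((↑u⁻¹ : R) • Q)) := (hQ.smul _).neg
  refine ⟨algebraMap R A ↑u⁻¹ * ∑ i ∈ Finset.range n, (-((↑u⁻¹ : R) • Q)) ^ i,
    Subalgebra.mul_mem _ (Subalgebra.algebraMap_mem _ _)
      (Subalgebra.sum_mem _ fun i _ => Subalgebra.pow_mem _ hx _), ?_⟩
  have hux : (algebraMap R A u + Q) * algebraMap R A ↑u⁻¹ = 1 - -((↑u⁻¹ : R) • Q) := by
    rw [add_mul, ← map_mul, Units.mul_inv, map_one, sub_neg_eq_add, Algebra.smul_def, mul_comm]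
  rw [← mul_assoc, hux, mul_neg_geom_sum, hn, sub_zero]

namespace AddMonoidAlgebra

variable {R : Type*} [CommRing R]

lemma mul_mem_supported_Icc {f g : R[ℤ]} {a b c d : ℤ} (hf : f ∈ supported R R (Set.Icc a b))
    (hg : g ∈ supported R R (Set.Icc c d)) :
    f * g ∈ supported R R (Set.Icc (a + c) (b + d)) := by
  classical
  rw [mem_supported] at *
  calc ↑(f * g).coeff.support
      ⊆ (↑(f.coeff.support + g.coeff.support) : Set ℤ) := by
        exact_mod_cast support_coeff_mul_subset f g
    _ ⊆ Set.Icc a b + Set.Icc c d := by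
        rw [Finset.coe_add]; exact Set.add_subset_add hf hg
    _ ⊆ Set.Icc (a + c) (b + d) := Set.Icc_add_Icc_subset a b c d

lemma single_mem_supported_Icc (t : ℤ) (c : R) : single t c ∈ supported R R (Set.Icc t t) := by
  rw [mem_supported, Set.Icc_self, coeff_single, ← Finset.coe_singleton, Finset.coe_subset]
  exact Finsupp.support_single_subset

lemma sum_single_mem_supported_Icc (l r : ℤ) (c : ℤ → R) :
    ∑ i ∈ Finset.Icc l r, single i (c i) ∈ supported R R (Set.Icc l r) :=
  Submodule.sum_mem _ fun i hi => supported_mono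
    (Set.Icc_subset_Icc (Finset.mem_Icc.1 hi).1 (Finset.mem_Icc.1 hi).2)
    (single_mem_supported_Icc i _)

lemma pow_mem_supported_Icc {f : R[ℤ]} {a b : ℤ} (hf : f ∈ supported R R (Set.Icc a b))
    (n : ℕ) : f ^ n ∈ supported R R (Set.Icc (n * a) (n * b)) := by
  induction n with
  | zero =>
    rw [pow_zero, Nat.cast_zero, zero_mul, zero_mul, one_def]
    exact single_mem_supported_Icc 0 1
  | succ n ih =>
    rw [pow_succ]
    convert mul_mem_supported_Icc ih hf using 3 <;> push_cast <;> ring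

lemma isNilpotent_single (t : ℤ) {c : R} (hc : IsNilpotent c) : IsNilpotent (single t c) := by
  obtain ⟨n, hn⟩ := hc
  exact ⟨n, by rw [single_pow, hn, single_zero]⟩

/-- Since `Q ^ n = 0`, polynomials in `Q` reduce to degree `< n`, so their windows stay bounded. -/
lemma adjoin_le_supported_Icc {Q : R[ℤ]} {w : ℤ} (hw : 0 ≤ w)
    (hQ : Q ∈ supported R R (Set.Icc (-w) w)) {n : ℕ} (hn : Q ^ n = 0) :
    Subalgebra.toSubmodule (Algebra.adjoin R {Q}) ≤
      supported R R (Set.Icc (-(n * w)) (n * w)) := by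
  rw [Algebra.adjoin_eq_span, Submodule.span_le]
  intro _ hy
  obtain ⟨i, rfl⟩ := Submonoid.mem_closure_singleton.1 hy
  rcases lt_or_ge i n with hi | hi
  · refine supported_mono (Set.Icc_subset_Icc ?_ ?_) (pow_mem_supported_Icc hQ i) <;>
      nlinarith [(Nat.cast_le (α := ℤ)).2 hi.le]
  · rw [pow_eq_zero_of_le hi hn]
    exact zero_mem _

theorem exists_mul_eq_one_pow_mem_supported {l r j : ℤ} {c : ℤ → R}
    (hj : j ∈ Finset.Icc l r) (hu : IsUnit (c j))
    (hnil : ∀ i ∈ Finset.Icc l r, i ≠ j → IsNilpotent (c i)) :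
    ∃ P' : R[ℤ], (∑ i ∈ Finset.Icc l r, single i (c i)) * P' = 1 ∧
      ∃ W : ℤ, ∀ m : ℕ, P' ^ m ∈ supported R R (Set.Icc (-W - m * j) (W - m * j)) := by
  set Q := ∑ i ∈ (Finset.Icc l r).erase j, single (i - j) (c i)
  have hfac : ∑ i ∈ Finset.Icc l r, single i (c i) =
      single j 1 * (algebraMap R R[ℤ] (c j) + Q) := by
    rw [← Finset.add_sum_erase _ _ hj, mul_add, Finset.mul_sum, coe_algebraMap]
    simp
  have hQnil : IsNilpotent Q := isNilpotent_sum fun i hi =>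
    isNilpotent_single _ (hnil i (Finset.mem_of_mem_erase hi) (Finset.ne_of_mem_erase hi))
  have hQsupp : Q ∈ supported R R (Set.Icc (-(r - l)) (r - l)) := by
    refine Submodule.sum_mem _ fun i hi => supported_mono ?_ (single_mem_supported_Icc _ _)
    have := Finset.mem_Icc.1 hj
    have := Finset.mem_Icc.1 (Finset.mem_of_mem_erase hi)
    exact Set.Icc_subset_Icc (by omega) (by omega)
  obtain ⟨V, hVadj, hV⟩ := hQnil.exists_mem_adjoin_mul_eq_one hu.unit
  obtain ⟨n, hn⟩ := hQnil
  refine ⟨single (-j) 1 * V, ?_, n * (r - l), fun m => ?_⟩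
  · calc (∑ i ∈ Finset.Icc l r, single i (c i)) * (single (-j) 1 * V)
        = single j 1 * single (-j) 1 * ((algebraMap R R[ℤ] (c j) + Q) * V) := by
          rw [hfac]; ring
      _ = 1 := by
          rw [← hu.unit_spec, hV, single_mul_single, add_neg_cancel, mul_one, mul_one, one_def]
  · have hrl : 0 ≤ r - l := by have := Finset.mem_Icc.1 hj; omega
    rw [mul_pow, single_pow, one_pow]
    refine supported_mono (Set.Icc_subset_Icc ?_ ?_) (mul_mem_supported_Icc
      (single_mem_supported_Icc (m • -j) 1)
      (adjoin_le_supported_Icc hrl hQsupp hn (Subalgebra.pow_mem _ hVadj m))) <;>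
      (rw [nsmul_eq_mul]; linarith)

end AddMonoidAlgebra

section ShiftAction

variable (R : Type*) [CommRing R]

def shiftHom : Multiplicative ℤ →* Module.End R (ℤ → R) where
  toFun t := LinearMap.funLeft R R (· + t.toAdd)
  map_one' := by ext; simp
  map_mul' s t := by ext x i; simp [LinearMap.funLeft, add_assoc]

noncomputable def shiftAct : R[ℤ] →ₐ[R] Module.End R (ℤ → R) :=
  AddMonoidAlgebra.lift R _ ℤ (shiftHom R)

variable {R}

lemma shiftAct_apply (ψ : R[ℤ]) (x : ℤ → R) (i : ℤ) :
    shiftAct R ψ x i = ψ.coeff.sum fun t c => c * x (i + t) := by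
  simp [shiftAct, lift_apply, Finsupp.sum, shiftHom, LinearMap.funLeft]

lemma shiftAct_single (t : ℤ) (c : R) (x : ℤ → R) (i : ℤ) :
    shiftAct R (single t c) x i = c * x (i + t) := by
  rw [shiftAct, lift_single]
  rfl

lemma dependsOn_shiftAct_apply {ψ : R[ℤ]} {a b : ℤ} (hψ : ψ ∈ supported R R (Set.Icc a b))
    (i : ℤ) : DependsOn (fun x => shiftAct R ψ x i) (Set.Icc (i + a) (i + b)) := by
  intro x y hxy
  simp only [shiftAct_apply, Finsupp.sum]
  refine Finset.sum_congr rfl fun t ht => ?_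
  obtain ⟨hat, htb⟩ := hψ ht
  rw [hxy (i + t) ⟨by linarith, by linarith⟩]

lemma coe_pow_of_coe_eq_shiftAct {E : Equiv.Perm (ℤ → R)} {P : R[ℤ]}
    (hE : ⇑E = shiftAct R P) (m : ℕ) : ⇑(E ^ m) = shiftAct R (P ^ m) := by
  rw [Equiv.Perm.coe_pow, hE, map_pow, Module.End.coe_pow]

lemma coe_symm_of_coe_eq_shiftAct {E : Equiv.Perm (ℤ → R)} {P P' : R[ℤ]}
    (hE : ⇑E = shiftAct R P) (hP : P * P' = 1) : ⇑E.symm = shiftAct R P' := by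
  funext x
  apply E.injective
  rw [Equiv.apply_symm_apply, hE, ← Module.End.mul_apply, ← map_mul, hP, map_one,
    Module.End.one_apply]

end ShiftAction

lemma cellAuto_eq_shiftAct (m : ℕ) (l r : ℤ) (lam : ℤ → ZMod m) :
    cellAuto m l r lam = shiftAct (ZMod m) (∑ j ∈ Finset.Icc l r, single j (lam j)) := by
  funext x i
  simp only [cellAuto, map_sum, LinearMap.sum_apply, Finset.sum_apply, shiftAct_single]

lemma dependsOn_mem_joinAtom {m ℓ : ℕ} {E : Equiv.Perm (ℤ → ZMod m)} {a b : ℤ}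
    {c : ℤ → ℤ → ZMod m} {s : Set ℤ}
    (h : ∀ t ∈ Finset.Icc a b, ∀ i ∈ Set.Icc (-(ℓ : ℤ)) ℓ,
      DependsOn (fun x => (E ^ t).symm x i) s) :
    DependsOn (· ∈ joinAtom m E ℓ a b c) s := by
  intro x y hxy
  simp only [joinAtom, cylAtom, Set.mem_iInter, Equiv.image_eq_preimage_symm, Set.mem_preimage,
    Set.mem_ofPred_eq]
  exact propext <| forall₂_congr fun t ht => forall₃_congr fun i hi₁ hi₂ =>
    by rw [show (E ^ t).symm x i = (E ^ t).symm y i from h t ht i ⟨hi₁, hi₂⟩ hxy]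

section JoinWindows

open Finset

variable {m ℓ : ℕ} {E : Equiv.Perm (ℤ → ZMod m)} {a b : ℤ} {c : ℤ → ℤ → ZMod m}

lemma dependsOn_mem_joinAtom_past {P : (ZMod m)[ℤ]} {l r : ℤ} (hE : ⇑E = shiftAct _ P)
    (hP : P ∈ supported (ZMod m) (ZMod m) (Set.Icc l r)) (hl : 0 ≤ l) (hr : 0 ≤ r)
    (hb : b ≤ 0) :
    DependsOn (· ∈ joinAtom m E ℓ a b c) ↑(Icc (-(ℓ : ℤ)) (ℓ - a * r)) := by
  refine dependsOn_mem_joinAtom fun t ht i hi => ?_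
  obtain ⟨hat, htb⟩ := mem_Icc.1 ht
  obtain ⟨n, rfl⟩ : ∃ n : ℕ, t = -n := ⟨(-t).toNat, by omega⟩
  rw [zpow_neg, zpow_natCast, Equiv.Perm.inv_def, Equiv.symm_symm,
    coe_pow_of_coe_eq_shiftAct hE, coe_Icc]
  refine (dependsOn_shiftAct_apply (pow_mem_supported_Icc hP n) i).mono ?_
  have hnl : 0 ≤ (n : ℤ) * l := by positivity
  have hnr : (n : ℤ) * r ≤ -a * r := mul_le_mul_of_nonneg_right (by omega) hr
  exact Set.Icc_subset_Icc (by linarith [hi.1]) (by linarith [hi.2])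

lemma dependsOn_mem_joinAtom_future {P' : (ZMod m)[ℤ]} {j W : ℤ}
    (hE : ⇑E.symm = shiftAct _ P')
    (hP' : ∀ n : ℕ, P' ^ n ∈ supported (ZMod m) (ZMod m) (Set.Icc (-W - n * j) (W - n * j)))
    (hj : 0 ≤ j) (ha : 0 ≤ a) :
    DependsOn (· ∈ joinAtom m E ℓ a b c) ↑(Icc (-ℓ - W - b * j) (ℓ + W - a * j)) := by
  refine dependsOn_mem_joinAtom fun t ht i hi => ?_
  obtain ⟨hat, htb⟩ := mem_Icc.1 ht
  obtain ⟨n, rfl⟩ : ∃ n : ℕ, t = n := ⟨t.toNat, by omega⟩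
  rw [zpow_natCast, ← Equiv.Perm.inv_def, ← inv_pow, Equiv.Perm.inv_def,
    coe_pow_of_coe_eq_shiftAct hE, coe_Icc]
  refine (dependsOn_shiftAct_apply (hP' n) i).mono ?_
  have hna : a * j ≤ n * j := mul_le_mul_of_nonneg_right hat hj
  have hnb : (n : ℤ) * j ≤ b * j := mul_le_mul_of_nonneg_right htb hj
  exact Set.Icc_subset_Icc (by linarith [hi.1]) (by linarith [hi.2])

end JoinWindows

section Bernoulli

open Finset

lemma measure_preimage_eq_ncard_mul {α β : Type*} [MeasurableSpace α] [MeasurableSpace β]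
    [MeasurableSingletonClass β] [Finite β] {μ : Measure α} {f : α → β} {c : ENNReal}
    (hf : Measurable f) (hc : ∀ y, μ {x | f x = y} = c) (S : Set β) :
    μ (f ⁻¹' S) = S.ncard * c := by
  have hS := S.toFinite
  rw [← hS.coe_toFinset, ← sum_measure_preimage_singleton _
    fun y _ => hf (measurableSet_singleton y), Set.ncard_coe_finset]
  simp [Set.preimage, hc]

lemma Finset.restrict_preimage_image_of_dependsOn {ι : Type*} {α : ι → Type*} {s : Finset ι}
    {A : Set (∀ i, α i)} (hA : DependsOn (· ∈ A) (s : Set ι)) :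
    s.restrict ⁻¹' (s.restrict '' A) = A := by
  refine Set.Subset.antisymm ?_ (Set.subset_preimage_image _ _)
  rintro x ⟨y, hy, hyx⟩
  have : (y ∈ A) = (x ∈ A) := hA fun i hi => congrFun hyx ⟨i, hi⟩
  exact this ▸ hy

namespace IsUniformBernoulli

variable {q : ℕ} {μ : Measure (ℤ → ZMod q)}

lemma measure_restrict_eq (hμ : IsUniformBernoulli q μ) (s : Finset ℤ) (v : s → ZMod q) :
    μ {x | s.restrict x = v} = (q : ENNReal)⁻¹ ^ #s := by
  set a : ℤ → ZMod q := Function.extend Subtype.val v 0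
  have hv : s.restrict a = v := funext fun i => Subtype.val_injective.extend_apply v 0 i
  have : {x | s.restrict x = v} = {x | ∀ i ∈ s, x i = a i} := by
    ext x
    simp [← hv, funext_iff]
  rw [this, hμ.2]

lemma measure_restrict_prod_eq (hμ : IsUniformBernoulli q μ) {s t : Finset ℤ}
    (hst : Disjoint s t) (vw : (s → ZMod q) × (t → ZMod q)) :
    μ {x | (s.restrict x, t.restrict x) = vw} =
      (q : ENNReal)⁻¹ ^ #s * (q : ENNReal)⁻¹ ^ #t := by
  classical
  set a : ℤ → ZMod q :=
    s.piecewise (Function.extend Subtype.val vw.1 0) (Function.extend Subtype.val vw.2 0)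
  have hv : s.restrict a = vw.1 := funext fun i => by
    simp [a]
  have hw : t.restrict a = vw.2 := funext fun i => by
    simp [a, Finset.disjoint_right.1 hst i.2]
  have : {x | (s.restrict x, t.restrict x) = vw} = {x | ∀ i ∈ s ∪ t, x i = a i} := by
    ext x
    simp [Prod.ext_iff, ← hv, ← hw, funext_iff, or_imp, forall_and]
  rw [this, hμ.2, card_union_of_disjoint hst, pow_add]

theorem measure_inter_of_dependsOn [NeZero q] (hμ : IsUniformBernoulli q μ)
    {s t : Finset ℤ} (hst : Disjoint s t) {A B : Set (ℤ → ZMod q)}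
    (hA : DependsOn (· ∈ A) (s : Set ℤ)) (hB : DependsOn (· ∈ B) (t : Set ℤ)) :
    μ (A ∩ B) = μ A * μ B := by
  rw [← restrict_preimage_image_of_dependsOn hA, ← restrict_preimage_image_of_dependsOn hB]
  have hinter : s.restrict ⁻¹' (s.restrict '' A) ∩ t.restrict ⁻¹' (t.restrict '' B) =
      (fun x => (s.restrict x, t.restrict x)) ⁻¹'
        ((s.restrict '' A) ×ˢ (t.restrict '' B)) := rfl
  rw [hinter, measure_preimage_eq_ncard_mul (by fun_prop) (hμ.measure_restrict_prod_eq hst),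
    measure_preimage_eq_ncard_mul (by fun_prop) (hμ.measure_restrict_eq s),
    measure_preimage_eq_ncard_mul (by fun_prop) (hμ.measure_restrict_eq t), Set.ncard_prod]
  push_cast
  ring

end IsUniformBernoulli

end Bernoulli

open Finset in
theorem cylinder_partition_is_bernoulli_general
    (p k : ℕ) (hp : p.Prime) (l r jp : ℤ)
    (hl : 0 ≤ l)
    (lam : ℤ → ZMod (p ^ k))
    (μ : Measure (ℤ → ZMod (p ^ k))) (hμ : IsUniformBernoulli (p ^ k) μ)
    (hbij : Function.Bijective (cellAuto (p ^ k) l r lam))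
    (hjp : l ≤ jp ∧ jp ≤ r ∧ ¬ (p : ℕ) ∣ (lam jp).val)
    (huniq : ∀ j : ℤ, l ≤ j → j ≤ r → ¬ (p : ℕ) ∣ (lam j).val → j = jp)
    (hjp0 : jp ≠ 0)
    (ℓ : ℕ) :
    ∃ N : ℕ, 0 < N ∧
      ∀ n : ℕ, ∀ c d : ℤ → (ℤ → ZMod (p ^ k)),
        μ (joinAtom (p ^ k)
              (Equiv.ofBijective (cellAuto (p ^ k) l r lam) hbij) ℓ (-(n : ℤ)) 0 c ∩
            joinAtom (p ^ k)
              (Equiv.ofBijective (cellAuto (p ^ k) l r lam) hbij) ℓ (N : ℤ) ((N : ℤ) + n) d) =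
          μ (joinAtom (p ^ k)
              (Equiv.ofBijective (cellAuto (p ^ k) l r lam) hbij) ℓ (-(n : ℤ)) 0 c) *
            μ (joinAtom (p ^ k)
              (Equiv.ofBijective (cellAuto (p ^ k) l r lam) hbij) ℓ (N : ℤ) ((N : ℤ) + n) d) := by
  obtain ⟨hjl, hjr, hunit⟩ := hjp
  have : NeZero p := ⟨hp.ne_zero⟩
  have hE := cellAuto_eq_shiftAct (p ^ k) l r lam
  obtain ⟨P', hPP', W, hW⟩ := exists_mul_eq_one_pow_mem_supported (mem_Icc.2 ⟨hjl, hjr⟩)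
    (ZMod.isUnit_of_not_dvd_val hp hunit) fun j hj hne => ZMod.isNilpotent_of_dvd_val <|
      not_not.1 (mt (huniq j (mem_Icc.1 hj).1 (mem_Icc.1 hj).2) hne)
  have hjp1 : 1 ≤ jp := by omega
  refine ⟨(2 * ℓ + W + 1).toNat + 1, by omega, fun n c d => ?_⟩
  set N := (2 * ℓ + W + 1).toNat + 1
  have hNjp : (N : ℤ) ≤ N * jp := le_mul_of_one_le_right (by positivity) hjp1
  -- the future window ends at `ℓ + W - N * jp < -ℓ`, where the past window begins
  refine hμ.measure_inter_of_dependsOn ?_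
    (dependsOn_mem_joinAtom_past hE (sum_single_mem_supported_Icc l r lam) hl (by omega) le_rfl)
    (dependsOn_mem_joinAtom_future (coe_symm_of_coe_eq_shiftAct hE hPP') hW (by omega)
      N.cast_nonneg)
  exact disjoint_left.2 fun x hs ht => by rw [mem_Icc] at hs ht; omega

/-- For an invertible linear cellular automaton over `ZMod p^k` with `0 ≤ l ≤ r` whose
unique permutative index `j_p` is nonzero, letting `ℓ` be the smallest positive integer
with `2ℓ ≥ r - l`, the cylinder partition `ξ` on coordinates `-ℓ, …, ℓ` is a Bernoulli
partition: there is `N > 0` such that for every `n ≥ 0` the joins `⋁_{i=-n}^{0} T_f^i ξ`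
and `⋁_{i=N}^{N+n} T_f^i ξ` are independent for the uniform Bernoulli measure. -/
theorem cylinder_partition_is_bernoulli
    (p k : ℕ) (hp : p.Prime) (hk : 1 ≤ k) (l r jp : ℤ)
    (hl : 0 ≤ l) (hlr : l ≤ r)
    (lam : ℤ → ZMod (p ^ k))
    (μ : Measure (ℤ → ZMod (p ^ k))) (hμ : IsUniformBernoulli (p ^ k) μ)
    (hbij : Function.Bijective (cellAuto (p ^ k) l r lam))
    (hjp : l ≤ jp ∧ jp ≤ r ∧ ¬ (p : ℕ) ∣ (lam jp).val)
    (huniq : ∀ j : ℤ, l ≤ j → j ≤ r → ¬ (p : ℕ) ∣ (lam j).val → j = jp)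
    (hjp0 : jp ≠ 0)
    (ℓ : ℕ) (hℓ1 : 1 ≤ ℓ) (hℓ2 : r - l ≤ 2 * (ℓ : ℤ))
    (hℓmin : ∀ ℓ₂ : ℕ, 1 ≤ ℓ₂ → r - l ≤ 2 * (ℓ₂ : ℤ) → ℓ ≤ ℓ₂) :
    ∃ N : ℕ, 0 < N ∧
      ∀ n : ℕ, ∀ c d : ℤ → (ℤ → ZMod (p ^ k)),
        μ (joinAtom (p ^ k)
              (Equiv.ofBijective (cellAuto (p ^ k) l r lam) hbij) ℓ (-(n : ℤ)) 0 c ∩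
            joinAtom (p ^ k)
              (Equiv.ofBijective (cellAuto (p ^ k) l r lam) hbij) ℓ (N : ℤ) ((N : ℤ) + n) d) =
          μ (joinAtom (p ^ k)
              (Equiv.ofBijective (cellAuto (p ^ k) l r lam) hbij) ℓ (-(n : ℤ)) 0 c) *
            μ (joinAtom (p ^ k)
              (Equiv.ofBijective (cellAuto (p ^ k) l r lam) hbij) ℓ (N : ℤ) ((N : ℤ) + n) d) :=
  cylinder_partition_is_bernoulli_general p k hp l r jp hl lam μ hμ hbij hjp huniq hjp0 ℓ
end
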